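/- In the root system of type B_n with simple roots ψ_1,...,ψ_n (ψ_n short), the Kostant cascade is β_1 = ψ_1 + 2(ψ_2 + ... + ψ_n), β_2 = ψ_1, β_3 = ψ_3 + 2(ψ_4 + ... + ψ_n), β_4 = ψ_3, and so on; for even r the layer Δ+_r is empty, and for odd r, if α, α' ∈ Δ+_r with α + α' ∈ Δ then α + α' = β_r. -/

import Mathlib

/-- Standard basis vector `e_i` (indices are `1`-based). -/
def Ev (i : ℕ) : ℕ → ℝ := fun k => if k = i then 1 else 0

/-- The Euclidean inner product on the coordinates `0, …, n`. -/
def ip (n : ℕ) (x y : ℕ → ℝ) : ℝ := ∑ k ∈ Finset.range (n + 1), x k * y k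

/-- Simple roots of type `B_n`: `ψ_i = e_i - e_{i+1}` for `i < n` and `ψ_n = e_n`
(the short simple root). -/
def ψB (n i : ℕ) : ℕ → ℝ := if i = n then Ev n else Ev i - Ev (i + 1)

/-- Positive roots of type `B_n`: `e_i ± e_j` (`i < j`) and `e_i`. -/
def posB (n : ℕ) : Set (ℕ → ℝ) :=
  {v | (∃ i j : ℕ, 1 ≤ i ∧ i < j ∧ j ≤ n ∧ (v = Ev i - Ev j ∨ v = Ev i + Ev j)) ∨
       (∃ i : ℕ, 1 ≤ i ∧ i ≤ n ∧ v = Ev i)}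

/-- All roots of type `B_n`. -/
def ΔB (n : ℕ) : Set (ℕ → ℝ) := {v | v ∈ posB n ∨ -v ∈ posB n}

/-- The Kostant cascade of type `B_n`:
`β_r = ψ_r + 2(ψ_{r+1} + ⋯ + ψ_n)` for `r` odd and `β_r = ψ_{r-1}` for `r` even. -/
noncomputable def βB (n r : ℕ) : ℕ → ℝ :=
  if r % 2 = 1 then ψB n r + ∑ i ∈ Finset.Icc (r + 1) n, (2 : ℝ) • ψB n i
  else ψB n (r - 1)

/-- The layer `Δ⁺_r`: positive roots orthogonal to `β_i` for `i < r`, not orthogonal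
to `β_r`, and different from `β_r`. -/
noncomputable def LayerB (n r : ℕ) : Set (ℕ → ℝ) :=
  {α ∈ posB n | (∀ i : ℕ, 1 ≤ i → i < r → ip n α (βB n i) = 0) ∧
    0 < ip n α (βB n r) ∧ α ≠ βB n r}

/-!
In coordinates the cascade is `β_r = e_r + e_{r+1}` for odd `r < n`, `β_n = e_n` for odd `n`,
and `β_r = e_{r-1} - e_r` for even `r`. Orthogonality to `β_1, …, β_{r-1}` makes a vector
vanish on the pairs of coordinates `{1, 2}, {3, 4}, …` below `r` (and, for even `r`, gives
`x_{r-1} + x_r = 0`). The partial sums `v_1 + ⋯ + v_m` form the basis dual to the simple roots,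
so `α ∈ β_r + ℕ ψ_1 + ⋯ + ℕ ψ_n` bounds every partial sum of `α` below by that of `β_r`; at
`m = r - 1`, `r + 1` or `n` this pins `α` down among the positive roots, whose coordinates
lie in `{-1, 0, 1}`. For odd `r` every root `α` of the layer has `⟨α, β_r⟩ = 1`, so a root
`α + α'` has `⟨α + α', β_r⟩ = 2`, which forces `α + α' = β_r`; for even `r` a positive `α`
with `⟨α, β_r⟩ > 0` orthogonal to `β_{r-1}` is `β_r` itself.
-/

lemma ip_Ev_right {n j : ℕ} (hj : j ≤ n) (x : ℕ → ℝ) : ip n x (Ev j) = x j := by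
  rw [ip, Finset.sum_eq_single_of_mem j (Finset.mem_range.2 (Nat.lt_succ_of_le hj))]
  · simp [Ev]
  · intro k _ hk; simp [Ev, hk]

lemma ip_add_right (n : ℕ) (x y z : ℕ → ℝ) : ip n x (y + z) = ip n x y + ip n x z := by
  simp only [ip, Pi.add_apply, mul_add, Finset.sum_add_distrib]

lemma ip_sub_right (n : ℕ) (x y z : ℕ → ℝ) : ip n x (y - z) = ip n x y - ip n x z := by
  simp only [ip, Pi.sub_apply, mul_sub, Finset.sum_sub_distrib]

lemma sum_Icc_two_smul_ψB {m n : ℕ} (hm : m ≤ n) :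
    ∑ i ∈ Finset.Icc m n, (2 : ℝ) • ψB n i = (2 : ℝ) • Ev m := by
  induction hm using Nat.decreasingInduction with
  | self => simp [ψB]
  | of_succ m hmn ih =>
    rw [← Finset.add_sum_Ioc_eq_sum_Icc hmn.le, ← Finset.Icc_add_one_left_eq_Ioc, ih, ψB,
      if_neg hmn.ne]
    ext k; simp only [Pi.add_apply, Pi.smul_apply, Pi.sub_apply, smul_eq_mul]; ring

lemma βB_of_odd_of_lt {n r : ℕ} (hr : r % 2 = 1) (hrn : r < n) :
    βB n r = Ev r + Ev (r + 1) := by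
  rw [βB, if_pos hr, ψB, if_neg hrn.ne, sum_Icc_two_smul_ψB hrn]
  ext k; simp only [Pi.add_apply, Pi.sub_apply, Pi.smul_apply, smul_eq_mul]; ring

lemma βB_self_of_odd {n : ℕ} (hn : n % 2 = 1) : βB n n = Ev n := by
  simp [βB, hn, ψB]

lemma βB_of_even {n r : ℕ} (hr : r % 2 = 0) (hr2 : 2 ≤ r) (hrn : r ≤ n) :
    βB n r = Ev (r - 1) - Ev r := by
  rw [βB, if_neg (by omega), ψB, if_neg (by omega), Nat.sub_add_cancel (by omega)]

lemma ip_βB_of_odd_of_lt {n s : ℕ} (hs : s % 2 = 1) (hsn : s < n) (x : ℕ → ℝ) :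
    ip n x (βB n s) = x s + x (s + 1) := by
  rw [βB_of_odd_of_lt hs hsn, ip_add_right, ip_Ev_right hsn.le, ip_Ev_right hsn]

lemma ip_βB_self_of_odd {n : ℕ} (hn : n % 2 = 1) (x : ℕ → ℝ) : ip n x (βB n n) = x n := by
  rw [βB_self_of_odd hn, ip_Ev_right le_rfl]

lemma ip_βB_of_even {n s : ℕ} (hs : s % 2 = 0) (hs2 : 2 ≤ s) (hsn : s ≤ n) (x : ℕ → ℝ) :
    ip n x (βB n s) = x (s - 1) - x s := by
  rw [βB_of_even hs hs2 hsn, ip_sub_right, ip_Ev_right (by omega), ip_Ev_right hsn]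

lemma βB_mem_posB {n r : ℕ} (hr1 : 1 ≤ r) (hrn : r ≤ n) : βB n r ∈ posB n := by
  rcases Nat.mod_two_eq_zero_or_one r with hr | hr
  · rw [βB_of_even hr (by omega) hrn]
    exact Or.inl ⟨r - 1, r, by omega, by omega, hrn, Or.inl rfl⟩
  · rcases hrn.lt_or_eq with hrn | rfl
    · rw [βB_of_odd_of_lt hr hrn]
      exact Or.inl ⟨r, r + 1, hr1, by omega, hrn, Or.inr rfl⟩
    · rw [βB_self_of_odd hr]
      exact Or.inr ⟨r, hr1, le_rfl, rfl⟩

lemma βB_apply_eq_zero {n r k : ℕ} (hrn : r ≤ n) (hk : k + k % 2 < r) :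
    βB n r k = 0 := by
  rcases Nat.mod_two_eq_zero_or_one r with hr | hr
  · rw [βB_of_even hr (by omega) hrn]
    grind [Ev, Pi.sub_apply]
  · rcases hrn.lt_or_eq with hrn | rfl
    · rw [βB_of_odd_of_lt hr hrn]
      grind [Ev, Pi.add_apply]
    · rw [βB_self_of_odd hr]
      grind [Ev]

section posB

variable {n : ℕ} {v : ℕ → ℝ}

lemma posB_apply_eq (h : v ∈ posB n) (k : ℕ) : v k = -1 ∨ v k = 0 ∨ v k = 1 := by
  rcases h with ⟨i, j, -, hij, -, rfl | rfl⟩ | ⟨i, -, -, rfl⟩ <;>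
    grind [Ev, Pi.add_apply, Pi.sub_apply]

lemma abs_posB_apply_le_one (h : v ∈ posB n) (k : ℕ) : |v k| ≤ 1 := by
  rcases posB_apply_eq h k with h | h | h <;> simp [h]

lemma posB_apply_le_one (h : v ∈ posB n) (k : ℕ) : v k ≤ 1 :=
  (le_abs_self _).trans (abs_posB_apply_le_one h k)

lemma abs_apply_le_one_of_mem_ΔB (h : v ∈ ΔB n) (k : ℕ) : |v k| ≤ 1 := by
  rcases h with h | h
  · exact abs_posB_apply_le_one h k
  · simpa using abs_posB_apply_le_one h k

lemma posB_eq_Ev_add_Ev (h : v ∈ posB n) {a b : ℕ} (hab : a ≠ b)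
    (ha : v a = 1) (hb : v b = 1) : v = Ev a + Ev b := by
  rcases h with ⟨i, j, -, hij, -, rfl | rfl⟩ | ⟨i, -, -, rfl⟩ <;>
    grind [Ev, Pi.add_apply, Pi.sub_apply]

lemma posB_eq_Ev_sub_Ev (h : v ∈ posB n) {a b : ℕ} (ha : v a = 1) (hb : v b = -1) :
    v = Ev a - Ev b := by
  rcases h with ⟨i, j, -, hij, -, rfl | rfl⟩ | ⟨i, -, -, rfl⟩ <;>
    grind [Ev, Pi.add_apply, Pi.sub_apply]

lemma posB_eq_Ev (h : v ∈ posB n) {a : ℕ} (ha : v a = 1)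
    (hz : ∀ k, 1 ≤ k → k ≤ n → k ≠ a → v k = 0) : v = Ev a := by
  rcases h with ⟨i, j, hi, hij, hj, rfl | rfl⟩ | ⟨i, -, -, rfl⟩ <;>
    grind [Ev, Pi.add_apply, Pi.sub_apply]

lemma posB_not_apply_eq_neg_one_of_ne (h : v ∈ posB n) {a b : ℕ} (hab : a ≠ b)
    (ha : v a = -1) (hb : v b = -1) : False := by
  rcases h with ⟨i, j, -, hij, -, rfl | rfl⟩ | ⟨i, -, -, rfl⟩ <;>
    grind [Ev, Pi.add_apply, Pi.sub_apply]

end posB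

/-- `k + k % 2 < r` says that the pair `{1, 2}, {3, 4}, …` containing `k` lies below `r`. -/
lemma orthogonal_βB_iff {n r : ℕ} (hrn : r ≤ n) (x : ℕ → ℝ) :
    (∀ s, 1 ≤ s → s < r → ip n x (βB n s) = 0) ↔
      (∀ k, 1 ≤ k → k + k % 2 < r → x k = 0) ∧
        (r % 2 = 0 → 2 ≤ r → x (r - 1) + x r = 0) := by
  constructor
  · intro h
    have hpair : ∀ s, s % 2 = 1 → s + 1 < r → x s = 0 ∧ x (s + 1) = 0 := by
      intro s hs hsr
      have h₁ := h s (by omega) (by omega)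
      have h₂ := h (s + 1) (by omega) hsr
      rw [ip_βB_of_odd_of_lt hs (by omega)] at h₁
      rw [ip_βB_of_even (by omega) (by omega) (by omega), Nat.add_sub_cancel] at h₂
      constructor <;> linarith
    refine ⟨fun k hk hkr => ?_, fun hr hr2 => ?_⟩
    · rcases Nat.mod_two_eq_zero_or_one k with hk2 | hk2
      · have := (hpair (k - 1) (by omega) (by omega)).2
        rwa [Nat.sub_add_cancel hk] at this
      · exact (hpair k hk2 (by omega)).1
    · have := h (r - 1) (by omega) (by omega)
      rwa [ip_βB_of_odd_of_lt (by omega) (by omega), Nat.sub_add_cancel (by omega)] at this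
  · rintro ⟨hz, hlast⟩ s hs hsr
    rcases Nat.mod_two_eq_zero_or_one s with hs2 | hs2
    · rw [ip_βB_of_even hs2 (by omega) (by omega), hz s hs (by omega),
        hz (s - 1) (by omega) (by omega), sub_zero]
    · rw [ip_βB_of_odd_of_lt hs2 (by omega)]
      by_cases hsr' : s + 1 < r
      · rw [hz s hs (by omega), hz (s + 1) (by omega) (by omega), add_zero]
      · have hr : r = s + 1 := by omega
        subst hr
        simpa using hlast (by omega) (by omega)

lemma βB_orthogonal_βB {n r s : ℕ} (hrn : r ≤ n) (hs1 : 1 ≤ s) (hsr : s < r) :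
    ip n (βB n r) (βB n s) = 0 := by
  refine (orthogonal_βB_iff hrn _).2
    ⟨fun k _ hk => βB_apply_eq_zero hrn hk, fun hr hr2 => ?_⟩ s hs1 hsr
  rw [βB_of_even hr hr2 hrn]
  grind [Ev, Pi.sub_apply]

def partialSum (m : ℕ) : (ℕ → ℝ) →ₗ[ℝ] ℝ := ∑ k ∈ Finset.Icc 1 m, LinearMap.proj k

lemma partialSum_apply (m : ℕ) (v : ℕ → ℝ) : partialSum m v = ∑ k ∈ Finset.Icc 1 m, v k := by
  simp [partialSum]

lemma partialSum_Ev (m j : ℕ) : partialSum m (Ev j) = if j ∈ Finset.Icc 1 m then 1 else 0 := by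
  simp [partialSum_apply, Ev, Finset.sum_ite_eq']

lemma partialSum_ψB {n m i : ℕ} (hm : m ≤ n) (hi : 1 ≤ i) :
    partialSum m (ψB n i) = if i = m then 1 else 0 := by
  unfold ψB
  split_ifs <;> simp only [map_sub, partialSum_Ev, Finset.mem_Icc] <;> grind

lemma partialSum_sum_smul_ψB {n m : ℕ} (hm1 : 1 ≤ m) (hm : m ≤ n) (c : ℕ → ℝ) :
    partialSum m (∑ i ∈ Finset.Icc 1 n, c i • ψB n i) = c m := by
  rw [map_sum, Finset.sum_eq_single_of_mem m (Finset.mem_Icc.2 ⟨hm1, hm⟩)]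
  · rw [map_smul, partialSum_ψB hm hm1, if_pos rfl, smul_eq_mul, mul_one]
  · intro i hi him
    rw [Finset.mem_Icc] at hi
    rw [map_smul, partialSum_ψB hm hi.1, if_neg him, smul_zero]

lemma partialSum_le_of_eq_add_sum_smul_ψB {n m : ℕ} (hm1 : 1 ≤ m) (hm : m ≤ n)
    {α β : ℕ → ℝ} {c : ℕ → ℕ} (hc : α = β + ∑ i ∈ Finset.Icc 1 n, (c i : ℝ) • ψB n i) :
    partialSum m β ≤ partialSum m α := by
  rw [hc, map_add, partialSum_sum_smul_ψB hm1 hm]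
  exact le_add_of_nonneg_right (Nat.cast_nonneg _)

lemma partialSum_eq_apply_of_eq_zero {m : ℕ} (hm : 1 ≤ m) {v : ℕ → ℝ}
    (hv : ∀ k, 1 ≤ k → k < m → v k = 0) : partialSum m v = v m := by
  rw [partialSum_apply, Finset.sum_eq_single_of_mem m (Finset.mem_Icc.2 ⟨hm, le_rfl⟩)]
  intro k hk hkm
  rw [Finset.mem_Icc] at hk
  exact hv k hk.1 (lt_of_le_of_ne hk.2 hkm)

lemma partialSum_succ (m : ℕ) (v : ℕ → ℝ) :
    partialSum (m + 1) v = partialSum m v + v (m + 1) := by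
  rw [partialSum_apply, partialSum_apply, Finset.sum_Icc_succ_top (by omega)]

lemma eq_βB_of_orthogonal_of_eq_add_sum_smul_ψB {n r : ℕ} (hr1 : 1 ≤ r) (hrn : r ≤ n)
    {α : ℕ → ℝ} (hα : α ∈ posB n) (horth : ∀ s, 1 ≤ s → s < r → ip n α (βB n s) = 0)
    {c : ℕ → ℕ} (hc : α = βB n r + ∑ i ∈ Finset.Icc 1 n, (c i : ℝ) • ψB n i) :
    α = βB n r := by
  obtain ⟨hz, hlast⟩ := (orthogonal_βB_iff hrn α).1 horth
  rcases Nat.mod_two_eq_zero_or_one r with hr | hr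
  · have hle := partialSum_le_of_eq_add_sum_smul_ψB (m := r - 1) (by omega) (by omega) hc
    have hzα : ∀ k, 1 ≤ k → k < r - 1 → α k = 0 := fun k hk hkr => hz k hk (by omega)
    have hzβ : ∀ k, 1 ≤ k → k < r - 1 → βB n r k = 0 :=
      fun k _ hkr => βB_apply_eq_zero hrn (by omega)
    rw [partialSum_eq_apply_of_eq_zero (by omega) hzα,
      partialSum_eq_apply_of_eq_zero (by omega) hzβ] at hle
    have hβ : βB n r (r - 1) = 1 := by
      simp [βB_of_even hr (by omega) hrn, Ev, show r - 1 ≠ r by omega]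
    have h1 : α (r - 1) = 1 := le_antisymm (posB_apply_le_one hα _) (hβ ▸ hle)
    have h2 : α r = -1 := by linarith [hlast hr (by omega)]
    rw [posB_eq_Ev_sub_Ev hα h1 h2, βB_of_even hr (by omega) hrn]
  · have hzα : ∀ k, 1 ≤ k → k < r → α k = 0 := fun k hk hkr => hz k hk (by omega)
    have hzβ : ∀ k, 1 ≤ k → k < r → βB n r k = 0 :=
      fun k _ hkr => βB_apply_eq_zero hrn (by omega)
    rcases hrn.lt_or_eq with hrn | rfl
    · have hle := partialSum_le_of_eq_add_sum_smul_ψB (m := r + 1) (by omega) hrn hc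
      rw [partialSum_succ, partialSum_succ, partialSum_eq_apply_of_eq_zero hr1 hzα,
        partialSum_eq_apply_of_eq_zero hr1 hzβ] at hle
      have hβ : βB n r r + βB n r (r + 1) = 2 := by
        simp [βB_of_odd_of_lt hr hrn, Ev]; norm_num
      have h1 := posB_apply_le_one hα r
      have h2 := posB_apply_le_one hα (r + 1)
      rw [posB_eq_Ev_add_Ev hα (Nat.ne_add_one r) (by linarith) (by linarith),
        βB_of_odd_of_lt hr hrn]
    · have hle := partialSum_le_of_eq_add_sum_smul_ψB (m := r) hr1 le_rfl hc
      rw [partialSum_eq_apply_of_eq_zero hr1 hzα, partialSum_eq_apply_of_eq_zero hr1 hzβ,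
        βB_self_of_odd hr] at hle
      rw [βB_self_of_odd hr]
      exact posB_eq_Ev hα (le_antisymm (posB_apply_le_one hα _) (by simpa [Ev] using hle))
        fun k hk hkr hkne => hzα k hk (lt_of_le_of_ne hkr hkne)

lemma layerB_eq_empty_of_even {n r : ℕ} (hr1 : 1 ≤ r) (hrn : r ≤ n) (hr : r % 2 = 0) :
    LayerB n r = ∅ := by
  refine Set.eq_empty_of_forall_notMem fun α ⟨hα, horth, hpos, hne⟩ => hne ?_
  have hr2 : 2 ≤ r := by omega
  have hlast := ((orthogonal_βB_iff hrn α).1 horth).2 hr hr2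
  rw [ip_βB_of_even hr hr2 hrn] at hpos
  have h1 : α (r - 1) = 1 := by
    rcases posB_apply_eq hα (r - 1) with h | h | h <;> first | exact h | linarith
  rw [posB_eq_Ev_sub_Ev hα h1 (by linarith), βB_of_even hr hr2 hrn]

lemma ip_βB_eq_one_of_mem_layerB_of_odd {n r : ℕ} (hrn : r ≤ n) (hr : r % 2 = 1)
    {α : ℕ → ℝ} (hα : α ∈ LayerB n r) : ip n α (βB n r) = 1 := by
  obtain ⟨hα, -, hpos, hne⟩ := hα
  rcases hrn.lt_or_eq with hrn | rfl
  · rw [ip_βB_of_odd_of_lt hr hrn] at hpos ⊢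
    rcases posB_apply_eq hα r with h1 | h1 | h1 <;>
      rcases posB_apply_eq hα (r + 1) with h2 | h2 | h2 <;> try linarith
    exact (hne (by rw [posB_eq_Ev_add_Ev hα (Nat.ne_add_one r) h1 h2, βB_of_odd_of_lt hr hrn])).elim
  · rw [ip_βB_self_of_odd hr] at hpos ⊢
    rcases posB_apply_eq hα r with h | h | h <;> linarith

lemma add_eq_βB_of_mem_layerB_of_odd {n r : ℕ} (hrn : r ≤ n) (hr : r % 2 = 1)
    {α α' : ℕ → ℝ} (hα : α ∈ LayerB n r) (hα' : α' ∈ LayerB n r) (hsum : α + α' ∈ ΔB n) :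
    α + α' = βB n r := by
  have h := ip_βB_eq_one_of_mem_layerB_of_odd hrn hr hα
  have h' := ip_βB_eq_one_of_mem_layerB_of_odd hrn hr hα'
  rcases hrn.lt_or_eq with hrn | rfl
  · rw [ip_βB_of_odd_of_lt hr hrn] at h h'
    have hb1 := abs_le.1 (abs_apply_le_one_of_mem_ΔB hsum r)
    have hb2 := abs_le.1 (abs_apply_le_one_of_mem_ΔB hsum (r + 1))
    simp only [Pi.add_apply] at hb1 hb2
    have e1 : (α + α') r = 1 := by simp only [Pi.add_apply]; linarith
    have e2 : (α + α') (r + 1) = 1 := by simp only [Pi.add_apply]; linarith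
    rcases hsum with hsum | hsum
    · rw [posB_eq_Ev_add_Ev hsum (Nat.ne_add_one r) e1 e2, βB_of_odd_of_lt hr hrn]
    · exact (posB_not_apply_eq_neg_one_of_ne hsum (Nat.ne_add_one r)
        (by simp [e1]) (by simp [e2])).elim
  · rw [ip_βB_self_of_odd hr] at h h'
    have := abs_le.1 (abs_apply_le_one_of_mem_ΔB hsum r)
    simp only [Pi.add_apply] at this
    linarith

theorem stmt18_general (n r : ℕ) (hr1 : 1 ≤ r) (hr2 : r ≤ n) :
    βB n r ∈ posB n ∧
    (∀ s : ℕ, 1 ≤ s → s < r → ip n (βB n r) (βB n s) = 0) ∧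
    -- β_r is maximal among positive roots orthogonal to β_1, …, β_{r-1}
    (∀ α ∈ posB n, (∀ s : ℕ, 1 ≤ s → s < r → ip n α (βB n s) = 0) →
      (∃ c : ℕ → ℕ, α = βB n r + ∑ i ∈ Finset.Icc 1 n, (c i : ℝ) • ψB n i) →
        α = βB n r) ∧
    (r % 2 = 0 → LayerB n r = ∅) ∧
    (r % 2 = 1 → ∀ α ∈ LayerB n r, ∀ α' ∈ LayerB n r,
      α + α' ∈ ΔB n → α + α' = βB n r) := by
  refine ⟨βB_mem_posB hr1 hr2, fun s hs1 hsr => βB_orthogonal_βB hr2 hs1 hsr,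
    fun α hα horth ⟨c, hc⟩ => eq_βB_of_orthogonal_of_eq_add_sum_smul_ψB hr1 hr2 hα horth hc,
    layerB_eq_empty_of_even hr1 hr2,
    fun hr α hα α' hα' => add_eq_βB_of_mem_layerB_of_odd hr2 hr hα hα'⟩

/-- In type `B_n` the Kostant cascade is `β_1 = ψ_1 + 2(ψ_2 + ⋯ + ψ_n)`, `β_2 = ψ_1`,
`β_3 = ψ_3 + 2(ψ_4 + ⋯ + ψ_n)`, `β_4 = ψ_3`, and so on; for even `r` the layer
`Δ⁺_r` is empty, and for odd `r`, if `α, α' ∈ Δ⁺_r` and `α + α'` is a root then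
`α + α' = β_r`. -/
theorem stmt18 (n r : ℕ) (hn : 1 ≤ n) (hr1 : 1 ≤ r) (hr2 : r ≤ n) :
    βB n r ∈ posB n ∧
    (∀ s : ℕ, 1 ≤ s → s < r → ip n (βB n r) (βB n s) = 0) ∧
    -- β_r is maximal among positive roots orthogonal to β_1, …, β_{r-1}
    (∀ α ∈ posB n, (∀ s : ℕ, 1 ≤ s → s < r → ip n α (βB n s) = 0) →
      (∃ c : ℕ → ℕ, α = βB n r + ∑ i ∈ Finset.Icc 1 n, (c i : ℝ) • ψB n i) →
        α = βB n r) ∧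
    (r % 2 = 0 → LayerB n r = ∅) ∧
    (r % 2 = 1 → ∀ α ∈ LayerB n r, ∀ α' ∈ LayerB n r,
      α + α' ∈ ΔB n → α + α' = βB n r) :=
  stmt18_general n r hr1 hr2
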